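/- With the notation of the recursive decomposition for τ = z_r ⋯ z_s and I = {r,…,s}: for each p ≥ 1 and each subset I' ⊆ I with |I∖I'| = p−1, the pullback-restriction (α^p)_{I'} is identically zero, where α¹ = α − α_I and α^{p} = α^{p−1} − Σ_{|I∖J|=p−1} (α^{p−1})_J. -/

import Mathlib

open Complex

abbrev Pt (n : ℕ) := Fin n → ℂ
abbrev Idx (n k : ℕ) := {s : Finset (Fin n) // s.card = k}
abbrev Form (n k : ℕ) := Idx n k → Pt n → ℂ

/-- A form is holomorphic on `Ω` if all its coefficient functions are. -/
def HoloOn {n k : ℕ} (Ω : Set (Pt n)) (α : Form n k) : Prop :=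
  ∀ s, DifferentiableOn ℂ (α s) Ω

/-- Wedge product of a `1`-form with coefficients `ω` with a `k`-form `α`. -/
noncomputable def wedge1 {n k : ℕ} (ω : Fin n → Pt n → ℂ) (α : Form n k) : Form n (k + 1) :=
  fun t z => ∑ j ∈ t.1.attach,
    (-1 : ℂ) ^ ((t.1.filter (fun i => i < j.1)).card) * ω j.1 z *
      α ⟨t.1.erase j.1, by rw [Finset.card_erase_of_mem j.2, t.2]; omega⟩ z

/-- Pullback of `α` to the coordinate subspace `{z_i = 0, i ∈ J}`, extended constantly:
substitute `z_i = 0` and `dz_i = 0` for `i ∈ J`. -/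
noncomputable def restrictJ {n k : ℕ} (J : Finset (Fin n)) (α : Form n k) : Form n k :=
  fun s z => if Disjoint s.1 J then α s (fun i => if i ∈ J then 0 else z i) else 0

/-- The (iterated) wedge `(⋀_{j ∈ J} dz_j/z_j) ∧ α`. -/
noncomputable def logWedge {n k r : ℕ} (J : Finset (Fin n)) (hJ : J.card = r) (α : Form n k) :
    Form n (k + r) :=
  fun t z =>
    if h : J ⊆ t.1 then
      (∏ j ∈ J, (z j)⁻¹) * α ⟨t.1 \ J, by rw [Finset.card_sdiff_of_subset h, t.2, hJ]; omega⟩ z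
    else 0

/-- `β` admits a holomorphic extension across `bad` on `Ω`. -/
def ExtendsHolo {n k : ℕ} (Ω : Set (Pt n)) (β : Form n k) (bad : Set (Pt n)) : Prop :=
  ∃ γ : Form n k, HoloOn Ω γ ∧ ∀ s, ∀ z ∈ Ω \ bad, γ s z = β s z

/-- Coefficients of the logarithmic differential `dσ/σ` of the monomial `z^a`. -/
noncomputable def logCoef {n : ℕ} (a : Fin n → ℕ) : Fin n → Pt n → ℂ :=
  fun j z => (a j : ℂ) / z j

/-- Coefficients of the exterior derivative `dσ` of the monomial `σ = z^a`. -/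
noncomputable def dMono {n : ℕ} (a : Fin n → ℕ) : Fin n → Pt n → ℂ :=
  fun j z => (a j : ℂ) * ∏ i, z i ^ (if i = j then a i - 1 else a i)

/-- The recursively defined forms `α⁰ = α`, `αⁱ⁺¹ = αⁱ − Σ_{J ⊆ I, |I∖J| = i} (αⁱ)_J`. -/
noncomputable def seqA {n k : ℕ} (I : Finset (Fin n)) (α : Form n k) : ℕ → Form n k
  | 0 => α
  | (i + 1) =>
      seqA I α i -
        ∑ J ∈ I.powerset.filter (fun J => (I \ J).card = i), restrictJ J (seqA I α i)

theorem Finset.card_sdiff_union_lt_of_not_subset {α : Type*} [DecidableEq α]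
    {s t u : Finset α} (hts : t ⊆ s) (htu : ¬t ⊆ u) : (s \ (t ∪ u)).card < (s \ u).card := by
  obtain ⟨x, hxt, hxu⟩ := Finset.not_subset.mp htu
  refine Finset.card_lt_card (Finset.ssubset_iff_of_subset ?_ |>.mpr ⟨x, ?_, ?_⟩)
  · exact Finset.sdiff_subset_sdiff subset_rfl Finset.subset_union_right
  · exact Finset.mem_sdiff.mpr ⟨hts hxt, hxu⟩
  · simp [hxt]

theorem Finset.eq_of_subset_of_card_sdiff_le {α : Type*} [DecidableEq α] {s t u : Finset α}
    (hts : t ⊆ s) (htu : t ⊆ u) (hus : u ⊆ s) (h : (s \ t).card ≤ (s \ u).card) : t = u := by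
  rw [Finset.card_sdiff_of_subset hts, Finset.card_sdiff_of_subset hus] at h
  exact Finset.eq_of_subset_of_card_le htu (by have := Finset.card_le_card hus; omega)

section restrictJ

variable {n k : ℕ}

lemma restrictJ_restrictJ (J J' : Finset (Fin n)) (β : Form n k) :
    restrictJ J (restrictJ J' β) = restrictJ (J ∪ J') β := by
  funext s z
  simp only [restrictJ, Finset.disjoint_union_right]
  split_ifs
  · congr 1
    funext i
    by_cases hi : i ∈ J <;> by_cases hi' : i ∈ J' <;> simp [hi, hi']
  all_goals tauto

lemma restrictJ_sub (J : Finset (Fin n)) (β γ : Form n k) :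
    restrictJ J (β - γ) = restrictJ J β - restrictJ J γ := by
  funext s z
  simp only [restrictJ, Pi.sub_apply]
  split_ifs <;> simp

lemma restrictJ_sum (J : Finset (Fin n)) {ι : Type*} (t : Finset ι) (f : ι → Form n k) :
    restrictJ J (∑ x ∈ t, f x) = ∑ x ∈ t, restrictJ J (f x) := by
  funext s z
  simp only [restrictJ, Finset.sum_apply]
  split_ifs <;> simp

end restrictJ

/-- Step `q + 1` subtracts the restrictions of `α^q` to the whole layer `|I ∖ J| = q`; restricting
such a term further to `I' ∪ J` with `J ≠ I'` lands in a deeper layer, already killed by induction. -/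
theorem restrictJ_seqA_eq_zero {n k : ℕ} {I I' : Finset (Fin n)} (α : Form n k) (hI' : I' ⊆ I) :
    ∀ {p : ℕ}, (I \ I').card < p → restrictJ I' (seqA I α p) = 0
  | 0, h => absurd h (Nat.not_lt_zero _)
  | q + 1, h => by
    set F := I.powerset.filter (fun J => (I \ J).card = q)
    have hlower : ∀ J ∈ F, J ≠ I' → restrictJ I' (restrictJ J (seqA I α q)) = 0 := by
      intro J hJ hJI'
      obtain ⟨hJI, hJq⟩ : J ⊆ I ∧ (I \ J).card = q := by simpa [F] using hJ
      have hI'J : ¬I' ⊆ J := fun hsub =>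
        hJI' (Finset.eq_of_subset_of_card_sdiff_le hI' hsub hJI (by omega)).symm
      rw [restrictJ_restrictJ]
      exact restrictJ_seqA_eq_zero α (Finset.union_subset hI' hJI)
        (hJq ▸ Finset.card_sdiff_union_lt_of_not_subset hI' hI'J)
    change restrictJ I' (seqA I α q - ∑ J ∈ F, restrictJ J (seqA I α q)) = 0
    rw [restrictJ_sub, restrictJ_sum]
    by_cases hI'F : I' ∈ F
    · rw [Finset.sum_eq_single_of_mem I' hI'F hlower, restrictJ_restrictJ, Finset.union_self,
        sub_self]
    · have hq : (I \ I').card < q := lt_of_le_of_ne (Nat.lt_succ_iff.mp h) fun hq =>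
        hI'F (by simp [F, hI', hq])
      rw [Finset.sum_eq_zero fun J hJ => hlower J hJ (ne_of_mem_of_not_mem hJ hI'F),
        restrictJ_seqA_eq_zero α hI' hq, sub_zero]

theorem stmt3_general {n k : ℕ} (I : Finset (Fin n)) (α : Form n k)
    (p : ℕ) (hp : 1 ≤ p) (I' : Finset (Fin n)) (hI' : I' ⊆ I)
    (hcard : (I \ I').card = p - 1) :
    restrictJ I' (seqA I α p) = 0 :=
  restrictJ_seqA_eq_zero α hI' (by omega)

/-- key induction step in Proposition 9. With `τ = z_r ⋯ z_s`,
`I = {r, …, s}`, and the recursion `α¹ = α − α_I`,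
`α^p = α^{p−1} − Σ_{|I∖J| = p−1} (α^{p−1})_J` starting from a holomorphic `k`-form `α`
on `ℂⁿ`: for every `p ≥ 1` and every `I' ⊆ I` with `|I ∖ I'| = p − 1`, the
pullback-restriction `(α^p)_{I'}` vanishes identically. -/
theorem stmt3 {n k : ℕ} (r s : Fin n) (hrs : r ≤ s) (I : Finset (Fin n))
    (hI : I = Finset.Icc r s) (α : Form n k) (hα : ∀ t, Differentiable ℂ (α t))
    (p : ℕ) (hp : 1 ≤ p) (I' : Finset (Fin n)) (hI' : I' ⊆ I)
    (hcard : (I \ I').card = p - 1) :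
    restrictJ I' (seqA I α p) = 0 :=
  stmt3_general I α p hp I' hI' hcard
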